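/- arXiv:0910.5744 — 2 statements merged into one kernel-verified Lean document; each statement's English description precedes it below -/
import Mathlib

section
/- The sum of the i largest components of y equals the minimum over r ∈ R and d ∈ R_{≥0}^p with r + d_j ≥ y_j for all j, of i·r + Σ_j d_j. -/
noncomputable def sortedDesc {p : ℕ} (y : Fin p → ℝ) : Fin p → ℝ :=
  fun i => y (Tuple.sort y (Fin.rev i))

/-- Ordered weighted average: `owa w y = ∑ i, w i * y_(i)` where `y_(i)` is the
`i`-th largest component of `y`. -/
noncomputable def owa {p : ℕ} (w y : Fin p → ℝ) : ℝ :=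
  ∑ i, w i * sortedDesc y i

lemma antitone_sortedDesc {p : ℕ} (y : Fin p → ℝ) : Antitone (sortedDesc y) := by
  intro a b h
  exact Tuple.monotone_sort y (Fin.rev_le_rev.mpr h)

lemma card_filter_lt_fin {p i : ℕ} (hip : i ≤ p) :
    (Finset.univ.filter (fun j : Fin p => (j : ℕ) < i)).card = i := by
  have : Finset.univ.filter (fun j : Fin p => (j : ℕ) < i)
      = (Finset.univ : Finset (Fin i)).image (Fin.castLE hip) := by
    ext j
    simp only [Finset.mem_filter, Finset.mem_univ, true_and, Finset.mem_image]
    constructor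
    · intro hj; exact ⟨⟨j, hj⟩, Fin.ext rfl⟩
    · rintro ⟨k, -, rfl⟩; exact k.isLt
  rw [this, Finset.card_image_of_injective _ (Fin.castLE_injective hip)]
  simp

theorem lorenz_isLeast_dual {p : ℕ} (y : Fin p → ℝ) (i : ℕ) (hi1 : 1 ≤ i) (hip : i ≤ p) :
    IsLeast
      {s : ℝ | ∃ (r : ℝ) (d : Fin p → ℝ), (∀ j, 0 ≤ d j) ∧ (∀ j, y j ≤ r + d j) ∧
        s = (i : ℝ) * r + ∑ j, d j}
      (∑ j ∈ Finset.univ.filter (fun j : Fin p => (j : ℕ) < i), sortedDesc y j) := by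
  set g := sortedDesc y with hg
  set e : Equiv.Perm (Fin p) := (Fin.revPerm).trans (Tuple.sort y) with he
  have hge : ∀ j, g j = y (e j) := fun j => rfl
  set S := Finset.univ.filter (fun j : Fin p => (j : ℕ) < i) with hS
  have hcard : S.card = i := card_filter_lt_fin hip
  constructor
  · -- membership
    set k : Fin p := ⟨i - 1, lt_of_lt_of_le (Nat.sub_lt hi1 one_pos) hip⟩ with hk
    refine ⟨g k, fun j => max (y j - g k) 0, fun j => le_max_right _ _, fun j => ?_, ?_⟩
    · show y j ≤ g k + max (y j - g k) 0
      have := le_max_left (y j - g k) (0:ℝ)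
      linarith
    · have hsum : ∑ j, max (y j - g k) 0 = ∑ j, max (g j - g k) 0 := by
        rw [← Equiv.sum_comp e (fun x => max (y x - g k) 0)]
        exact Finset.sum_congr rfl fun j _ => by rw [hge j]
      rw [hsum]
      have hsplit := Finset.sum_filter_add_sum_filter_not Finset.univ
        (fun j : Fin p => (j : ℕ) < i) (fun j => max (g j - g k) 0)
      have h1 : ∑ j ∈ S, max (g j - g k) 0 = ∑ j ∈ S, (g j - g k) := by
        refine Finset.sum_congr rfl fun j hj => ?_
        have hj' : (j : ℕ) < i := (Finset.mem_filter.mp hj).2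
        have : g k ≤ g j := antitone_sortedDesc y (by
          show (j : ℕ) ≤ i - 1
          omega)
        exact max_eq_left (by linarith)
      have h2 : ∑ j ∈ Finset.univ.filter (fun j : Fin p => ¬ (j : ℕ) < i),
          max (g j - g k) 0 = 0 := by
        refine Finset.sum_eq_zero fun j hj => ?_
        have hj' : ¬ (j : ℕ) < i := (Finset.mem_filter.mp hj).2
        have : g j ≤ g k := antitone_sortedDesc y (by
          show (k : ℕ) ≤ (j : ℕ)
          simp only [hk]
          omega)
        exact max_eq_right (by linarith)
      have : ∑ j, max (g j - g k) 0 = ∑ j ∈ S, (g j - g k) := by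
        rw [← hsplit, h1, h2, add_zero]
      rw [this, Finset.sum_sub_distrib, Finset.sum_const, hcard, nsmul_eq_mul]
      ring
  · -- lower bound
    rintro s ⟨r, d, hd0, hyd, rfl⟩
    have step1 : ∑ j ∈ S, g j ≤ ∑ j ∈ S, (r + d (e j)) := by
      refine Finset.sum_le_sum fun j _ => ?_
      rw [hge j]; exact hyd (e j)
    have step2 : ∑ j ∈ S, (r + d (e j)) = (i : ℝ) * r + ∑ j ∈ S, d (e j) := by
      rw [Finset.sum_add_distrib, Finset.sum_const, hcard, nsmul_eq_mul]
    have step3 : ∑ j ∈ S, d (e j) ≤ ∑ j, d j := by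
      have him : ∑ x ∈ S.image ⇑e, d x = ∑ x ∈ S, d (e x) :=
        Finset.sum_image (fun a _ b _ h => e.injective h)
      rw [← him]
      exact Finset.sum_le_sum_of_subset_of_nonneg (Finset.subset_univ _)
        (fun j _ _ => hd0 j)
    linarith
end

section
/- Cycle optimality condition: Let G be a finite connected graph with vector edge costs and let OWA have non-increasing nonnegative weights. Let C be a cycle of G and e ∈ C an edge such that OWA(v^{e'} − v^e) ≤ 0 for all edges e' ∈ C. Then there exists an OWA-optimal spanning tree of G not containing e. -/
/-- The vector cost of a subgraph: sum of the edge cost vectors over its edges. -/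
noncomputable def cost {V : Type*} [Fintype V] {p : ℕ} (v : Sym2 V → Fin p → ℝ)
    (T : SimpleGraph V) : Fin p → ℝ :=
  ∑ e ∈ T.edgeSet.toFinite.toFinset, v e

open SimpleGraph

section Owa

variable {p : ℕ}

lemma sortedDesc_eq_comp (y : Fin p → ℝ) :
    sortedDesc y = y ∘ Fin.revPerm.trans (Tuple.sort y) := rfl

lemma sortedDesc_antitone (y : Fin p → ℝ) : Antitone (sortedDesc y) :=
  fun _ _ hij => Tuple.monotone_sort y (Fin.rev_le_rev.mpr hij)

/-- Rearrangement inequality: `sortedDesc y` is ordered like the antitone `w`. -/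
lemma sum_mul_comp_perm_le_owa {w : Fin p → ℝ} (hw : Antitone w) (y : Fin p → ℝ)
    (σ : Equiv.Perm (Fin p)) : ∑ i, w i * y (σ i) ≤ owa w y := by
  have hmono : Monovary w (sortedDesc y) := fun i j hij =>
    hw (not_lt.mp fun hji => (sortedDesc_antitone y hji.le).not_gt hij)
  set τ : Equiv.Perm (Fin p) := σ.trans ((Fin.revPerm.trans (Tuple.sort y)).symm)
  have hτ : ∀ i, y (σ i) = sortedDesc y (τ i) := fun i => by
    simp [τ, sortedDesc_eq_comp]
  simp_rw [hτ]
  exact hmono.sum_mul_comp_perm_le_sum_mul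

lemma owa_add_le {w : Fin p → ℝ} (hw : Antitone w) (x y : Fin p → ℝ) :
    owa w (x + y) ≤ owa w x + owa w y := by
  set σ : Equiv.Perm (Fin p) := Fin.revPerm.trans (Tuple.sort (x + y))
  calc owa w (x + y) = ∑ i, w i * x (σ i) + ∑ i, w i * y (σ i) := by
        simp only [owa, sortedDesc_eq_comp, ← Finset.sum_add_distrib, ← mul_add]; rfl
    _ ≤ owa w x + owa w y :=
        add_le_add (sum_mul_comp_perm_le_owa hw x σ) (sum_mul_comp_perm_le_owa hw y σ)

end Owa

namespace SimpleGraph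

variable {V : Type*} {G T H K : SimpleGraph V}

lemma Walk.reachable_deleteEdges_or {z a : V} (q : G.Walk z a) (b : V) :
    (G.deleteEdges {s(a, b)}).Reachable z a ∨ (G.deleteEdges {s(a, b)}).Reachable z b := by
  induction q with
  | nil => exact .inl (.refl _)
  | @cons z z' a h q ih =>
    by_cases hzz' : s(z, z') = s(a, b)
    · rcases Sym2.eq_iff.mp hzz' with ⟨rfl, -⟩ | ⟨rfl, -⟩
      · exact .inl (.refl _)
      · exact .inr (.refl _)
    · have hadj : (G.deleteEdges {s(a, b)}).Adj z z' := deleteEdges_adj.mpr ⟨h, hzz'⟩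
      exact ih.imp hadj.reachable.trans hadj.reachable.trans

theorem IsTree.deleteEdges_sup_edge (hT : T.IsTree) {a b x y : V}
    (hxy : ¬ (T.deleteEdges {s(a, b)}).Reachable x y) :
    (T.deleteEdges {s(a, b)} ⊔ edge x y).IsTree := by
  set D := T.deleteEdges {s(a, b)}
  have hD : D ≤ D ⊔ edge x y := le_sup_left
  have side : ∀ z, D.Reachable z a ∨ D.Reachable z b := fun z =>
    (hT.connected.preconnected z a).some.reachable_deleteEdges_or b
  have hxy' : (D ⊔ edge x y).Reachable x y :=
    Adj.reachable ((sup_adj _ _ _ _).mpr (.inr ((edge_adj _ _ _ _).mpr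
      ⟨.inl ⟨rfl, rfl⟩, fun h => hxy (h ▸ .rfl)⟩)))
  have hab : (D ⊔ edge x y).Reachable a b := by
    rcases side x with hx | hx <;> rcases side y with hy | hy
    · exact absurd (hx.trans hy.symm) hxy
    · exact (hx.mono hD).symm.trans (hxy'.trans (hy.mono hD))
    · exact (hy.mono hD).symm.trans (hxy'.symm.trans (hx.mono hD))
    · exact absurd (hx.trans hy.symm) hxy
  refine ⟨(connected_iff_exists_forall_reachable _).mpr ⟨a, fun z => ?_⟩, ?_⟩
  · rcases side z with hz | hz
    · exact (hz.mono hD).symm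
    · exact hab.trans (hz.mono hD).symm
  · exact (hT.isAcyclic.anti (deleteEdges_le _)).sup_edge_of_not_reachable hxy

lemma Reachable.exists_adj_not_reachable {a b : V} (hK : K.Reachable a b)
    (hH : ¬ H.Reachable a b) : ∃ x y, K.Adj x y ∧ ¬ H.Reachable x y := by
  obtain ⟨q⟩ := hK
  obtain ⟨d, -, hd₁, hd₂⟩ := q.exists_boundary_dart {z | H.Reachable a z} .rfl hH
  exact ⟨d.fst, d.snd, d.adj, fun h => hd₂ (hd₁.trans h)⟩

/-- A cycle through an edge joining the two sides of a cut (the classes of `H.Reachable`)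
crosses it in a second edge. -/
lemma Walk.IsCycle.exists_mem_edges_ne_not_reachable {u a b : V} {c : G.Walk u u}
    (hc : c.IsCycle) (hab : s(a, b) ∈ c.edges) (hH : ¬ H.Reachable a b) :
    ∃ x y, s(x, y) ∈ c.edges ∧ s(x, y) ≠ s(a, b) ∧ ¬ H.Reachable x y := by
  set C := fromEdgeSet {e | e ∈ c.edges}
  have hcC : ∀ e ∈ c.edges, e ∈ C.edgeSet := fun e he => by
    rw [edgeSet_fromEdgeSet]
    exact ⟨he, G.not_isDiag_of_mem_edgeSet (c.edges_subset_edgeSet he)⟩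
  have hK : (C.deleteEdges {s(a, b)}).Reachable a b :=
    (adj_and_reachable_delete_edges_iff_exists_cycle.mpr
      ⟨u, c.transfer C hcC, hc.transfer hcC, by simpa using hab⟩).2
  obtain ⟨x, y, hxy, hH'⟩ := hK.exists_adj_not_reachable hH
  simp only [deleteEdges_adj, fromEdgeSet_adj, C, Set.mem_ofPred_eq, Set.mem_singleton_iff] at hxy
  exact ⟨x, y, hxy.1.1, hxy.2, hH'⟩

lemma Connected.exists_isTree_le_forall_le {β : Type*} [LinearOrder β] [Finite V]
    (hG : G.Connected) (f : SimpleGraph V → β) :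
    ∃ T ≤ G, T.IsTree ∧ ∀ T' ≤ G, T'.IsTree → f T ≤ f T' := by
  obtain ⟨T, ⟨hTG, hT⟩, hmin⟩ := Set.exists_min_image {T | T ≤ G ∧ T.IsTree} f
    (Set.toFinite _) hG.exists_isTree_le
  exact ⟨T, hTG, hT, fun T' hT'G hT' => hmin T' ⟨hT'G, hT'⟩⟩

variable [Fintype V] {p : ℕ} (v : Sym2 V → Fin p → ℝ)

lemma cost_sup_edge {x y : V} (hxy : x ≠ y) (hn : ¬ T.Adj x y) :
    cost v (T ⊔ edge x y) = cost v T + v s(x, y) := by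
  classical
  have hfin : (T ⊔ edge x y).edgeSet.toFinite.toFinset
      = insert s(x, y) T.edgeSet.toFinite.toFinset := by
    ext; simp [edgeSet_edge_of_ne hxy]
  rw [cost, cost, hfin, Finset.sum_insert (by simpa using hn), add_comm]

lemma cost_deleteEdges_singleton {e : Sym2 V} (he : e ∈ T.edgeSet) :
    cost v (T.deleteEdges {e}) = cost v T - v e := by
  classical
  have hfin : (T.deleteEdges {e}).edgeSet.toFinite.toFinset
      = T.edgeSet.toFinite.toFinset.erase e := by
    ext; simp [and_comm]
  rw [cost, cost, hfin, Finset.sum_erase_eq_sub (by simpa using he)]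

end SimpleGraph

theorem cycle_optimality_condition_general {V : Type*} [Fintype V] {p : ℕ}
    (G : SimpleGraph V) (hG : G.Connected)
    (v : Sym2 V → Fin p → ℝ) (w : Fin p → ℝ) (hw : Antitone w)
    (u : V) (c : G.Walk u u) (hc : c.IsCycle)
    (e0 : Sym2 V) (he0 : e0 ∈ c.edges)
    (hworst : ∀ e' ∈ c.edges, owa w (v e' - v e0) ≤ 0) :
    ∃ T : SimpleGraph V, T ≤ G ∧ T.IsTree ∧ e0 ∉ T.edgeSet ∧
      ∀ T' : SimpleGraph V, T' ≤ G → T'.IsTree →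
        owa w (cost v T) ≤ owa w (cost v T') := by
  obtain ⟨T, hTG, hT, hTmin⟩ := hG.exists_isTree_le_forall_le (fun T => owa w (cost v T))
  by_cases he0T : e0 ∉ T.edgeSet
  · exact ⟨T, hTG, hT, he0T, hTmin⟩
  rw [not_not] at he0T
  induction e0 using Sym2.ind with | _ a b => ?_
  have hbridge : ¬ (T.deleteEdges {s(a, b)}).Reachable a b :=
    isAcyclic_iff_forall_adj_isBridge.mp hT.isAcyclic he0T
  obtain ⟨x, y, hxyc, hne, hcross⟩ := hc.exists_mem_edges_ne_not_reachable he0 hbridge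
  have hxy : x ≠ y := fun h => hcross (h ▸ .rfl)
  refine ⟨T.deleteEdges {s(a, b)} ⊔ edge x y, sup_le ((deleteEdges_le _).trans hTG) ?_,
    hT.deleteEdges_sup_edge hcross, ?_, fun T' hT'G hT' => ?_⟩
  · exact (edge_le_iff _).mpr (.inr (c.adj_of_mem_edges hxyc))
  · simp [edgeSet_edge_of_ne hxy, Ne.symm hne]
  calc owa w (cost v (T.deleteEdges {s(a, b)} ⊔ edge x y))
      = owa w (cost v T + (v s(x, y) - v s(a, b))) := by
        rw [cost_sup_edge v hxy (fun h => hcross h.reachable), cost_deleteEdges_singleton v he0T]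
        congr 1
        abel
    _ ≤ owa w (cost v T) + owa w (v s(x, y) - v s(a, b)) := owa_add_le hw _ _
    _ ≤ owa w (cost v T) := by linarith [hworst _ hxyc]
    _ ≤ owa w (cost v T') := hTmin T' hT'G hT'

theorem cycle_optimality_condition {V : Type*} [Fintype V] {p : ℕ}
    (G : SimpleGraph V) (hG : G.Connected)
    (v : Sym2 V → Fin p → ℝ) (w : Fin p → ℝ) (hw : Antitone w) (hw0 : ∀ i, 0 ≤ w i)
    (u : V) (c : G.Walk u u) (hc : c.IsCycle)
    (e0 : Sym2 V) (he0 : e0 ∈ c.edges)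
    (hworst : ∀ e' ∈ c.edges, owa w (v e' - v e0) ≤ 0) :
    ∃ T : SimpleGraph V, T ≤ G ∧ T.IsTree ∧ e0 ∉ T.edgeSet ∧
      ∀ T' : SimpleGraph V, T' ≤ G → T'.IsTree →
        owa w (cost v T) ≤ owa w (cost v T') :=
  cycle_optimality_condition_general G hG v w hw u c hc e0 he0 hworst
end
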